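/- The marginalized MALA proposal density with Exp(1)-randomized step size satisfies, up to a normalizing constant depending only on h and d: Q̄_h(x,y) = ∫₀^∞ e^{−z} φ_d(y; x + hz∇log π(x), 2hz I) dz ∝ e^{c}·(a/b)^{1/2−d/4}·K_{1−d/2}(2√(ab)), where a = ‖y−x‖²/(4h), b = 1 + h‖∇log π(x)‖²/4, c = ⟨y−x, ∇log π(x)⟩/2, and K_ν is the modified Bessel function of the second kind. -/

import Mathlib

open Real MeasureTheory
open scoped RealInnerProductSpace

/-- Density of the `d`-dimensional Gaussian with mean `m` and covariance `s·I`. -/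
noncomputable def gaussDens (d : ℕ) (y m : EuclideanSpace ℝ (Fin d)) (s : ℝ) : ℝ :=
  (2 * Real.pi * s) ^ (-(d : ℝ) / 2) * Real.exp (-‖y - m‖ ^ 2 / (2 * s))

/-- The modified Bessel function of the second kind
`K_ν(x) = (1/2)∫₀^∞ t^{ν-1} exp(-x(t+1/t)/2) dt`. -/
noncomputable def besselK (ν x : ℝ) : ℝ :=
  (1 / 2) * ∫ t in Set.Ioi (0 : ℝ), t ^ (ν - 1) * Real.exp (-x * (t + 1 / t) / 2)

/-- The marginalized MALA proposal density with `Exp(1)`-randomized step size is,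
up to a normalizing constant depending only on `h` and `d`, equal to
`e^c (a/b)^{1/2 - d/4} K_{1-d/2}(2√(ab))`. -/
theorem stmt12 (d : ℕ) (hd : 0 < d) (h : ℝ) (hh : 0 < h)
    (p : EuclideanSpace ℝ (Fin d) → ℝ) (hp : ∀ x, 0 < p x)
    (hdiff : Differentiable ℝ fun u => Real.log (p u)) :
    ∃ C > (0 : ℝ), ∀ x y : EuclideanSpace ℝ (Fin d), y ≠ x →
      (∫ z in Set.Ioi (0 : ℝ), Real.exp (-z) *
          gaussDens d y (x + (h * z) • gradient (fun u => Real.log (p u)) x) (2 * h * z))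
        = C * Real.exp (⟪y - x, gradient (fun u => Real.log (p u)) x⟫ / 2) *
            ((‖y - x‖ ^ 2 / (4 * h)) /
              (1 + h * ‖gradient (fun u => Real.log (p u)) x‖ ^ 2 / 4))
                ^ ((1 : ℝ) / 2 - (d : ℝ) / 4) *
            besselK (1 - (d : ℝ) / 2)
              (2 * Real.sqrt ((‖y - x‖ ^ 2 / (4 * h)) *
                (1 + h * ‖gradient (fun u => Real.log (p u)) x‖ ^ 2 / 4))) := by
  refine ⟨2 * (4 * Real.pi * h) ^ (-(d : ℝ) / 2), by positivity, fun x y hxy => ?_⟩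
  set g := gradient (fun u => Real.log (p u)) x with hgdef
  set a := ‖y - x‖ ^ 2 / (4 * h) with hadef
  set b := 1 + h * ‖g‖ ^ 2 / 4 with hbdef
  set c := ⟪y - x, g⟫ / 2 with hcdef
  set ν := 1 - (d : ℝ) / 2 with hνdef
  have ha : 0 < a := by
    have hyx : 0 < ‖y - x‖ := by
      simpa [norm_pos_iff, sub_eq_zero] using hxy
    positivity
  have hb : 0 < b := by positivity
  set s := Real.sqrt (a / b) with hsdef
  have hs : 0 < s := Real.sqrt_pos.mpr (by positivity)
  set r := Real.sqrt (a * b) with hrdef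
  have hr1 : r = s * b := by
    rw [hrdef, hsdef, show a * b = (a / b) * b ^ 2 by field_simp,
      Real.sqrt_mul (by positivity), Real.sqrt_sq hb.le]
  have hrs1 : r * s⁻¹ = b := by
    rw [hr1]; field_simp
  have hrs2 : r * s = a := by
    rw [hr1]
    have hss : s * s = a / b := Real.mul_self_sqrt (by positivity)
    calc s * b * s = (s * s) * b := by ring
      _ = a / b * b := by rw [hss]
      _ = a := by field_simp
  set F : ℝ → ℝ := fun t => t ^ (ν - 1) * Real.exp (-(2 * r) * (t + 1 / t) / 2) with hFdef
  have key : ∀ z ∈ Set.Ioi (0 : ℝ), Real.exp (-z) * gaussDens d y (x + (h * z) • g) (2 * h * z)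
      = (4 * Real.pi * h) ^ (-(d : ℝ) / 2) * Real.exp c * s ^ (ν - 1) * F (s⁻¹ * z) := by
    intro z hz
    rw [Set.mem_Ioi] at hz
    have hnorm : ‖y - (x + (h * z) • g)‖ ^ 2
        = ‖y - x‖ ^ 2 - 2 * (h * z * ⟪y - x, g⟫) + (h * z) ^ 2 * ‖g‖ ^ 2 := by
      rw [sub_add_eq_sub_sub, norm_sub_sq_real, real_inner_smul_right, norm_smul,
        Real.norm_eq_abs, mul_pow, sq_abs]
    rw [gaussDens, hnorm, hFdef]
    have hpow : (2 * Real.pi * (2 * h * z)) ^ (-(d : ℝ) / 2)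
        = (4 * Real.pi * h) ^ (-(d : ℝ) / 2) * z ^ (-(d : ℝ) / 2) := by
      rw [show 2 * Real.pi * (2 * h * z) = (4 * Real.pi * h) * z by ring,
        Real.mul_rpow (by positivity) hz.le]
    have hpow2 : s ^ (ν - 1) * (s⁻¹ * z) ^ (ν - 1) = z ^ (-(d : ℝ) / 2) := by
      rw [Real.mul_rpow (by positivity) hz.le, Real.inv_rpow hs.le,
        show ν - 1 = -(d : ℝ) / 2 by rw [hνdef]; ring]
      field_simp
    have hexp : -z + -(‖y - x‖ ^ 2 - 2 * (h * z * ⟪y - x, g⟫) + (h * z) ^ 2 * ‖g‖ ^ 2)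
          / (2 * (2 * h * z)) = c + -(2 * r) * ((s⁻¹ * z) + 1 / (s⁻¹ * z)) / 2 := by
      have e1 : -(2 * r) * ((s⁻¹ * z) + 1 / (s⁻¹ * z)) / 2
          = -((r * s⁻¹) * z) - (r * s) / z := by
        rw [one_div, mul_inv, inv_inv]
        field_simp
        ring
      rw [e1, hrs1, hrs2, hcdef, hadef, hbdef]
      field_simp
      ring
    have hE : Real.exp (-z) * Real.exp (-(‖y - x‖ ^ 2 - 2 * (h * z * ⟪y - x, g⟫)
          + (h * z) ^ 2 * ‖g‖ ^ 2) / (2 * (2 * h * z)))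
        = Real.exp c * Real.exp (-(2 * r) * ((s⁻¹ * z) + 1 / (s⁻¹ * z)) / 2) := by
      rw [← Real.exp_add, ← Real.exp_add, hexp]
    rw [hpow, ← hpow2]
    linear_combination ((4 * Real.pi * h) ^ (-(d : ℝ) / 2)
      * (s ^ (ν - 1) * (s⁻¹ * z) ^ (ν - 1))) * hE
  rw [setIntegral_congr_fun measurableSet_Ioi key, integral_const_mul,
    integral_comp_mul_left_Ioi F 0 (inv_pos.mpr hs)]
  have hbK : ∫ t in Set.Ioi (0 : ℝ), F t = 2 * besselK ν (2 * r) := by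
    rw [besselK]
    simp only [hFdef]
    ring
  rw [mul_zero, inv_inv, smul_eq_mul, hbK]
  have hsν : s ^ (ν - 1) * s = (a / b) ^ ((1 : ℝ) / 2 - (d : ℝ) / 4) := by
    have h1 : s ^ (ν - 1) * s = s ^ ν := by
      nth_rewrite 2 [← Real.rpow_one s]
      rw [← Real.rpow_add hs]
      norm_num
    rw [h1, hsdef, Real.sqrt_eq_rpow,
      ← Real.rpow_mul (by positivity : (0:ℝ) ≤ a / b)]
    congr 1
    rw [hνdef]
    ring
  linear_combination (2 * (4 * Real.pi * h) ^ (-(d : ℝ) / 2) * Real.exp c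
    * besselK ν (2 * r)) * hsν
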